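/- arXiv:1606.00269 — 2 statements merged into one kernel-verified Lean document; each statement's English description precedes it below -/
import Mathlib

section
/- Let f be strongly convex with modulus μ and have L-Lipschitz gradient, with unique minimizer x*. Then gradient descent with step size h = 2/(μ+L) satisfies ‖x_{k+1} − x*‖² ≤ ((L−μ)/(L+μ))²·‖x_k − x*‖² for all k ≥ 0. -/
/-!
The interpolation inequality `μL‖a - b‖² + ‖∇f a - ∇f b‖² ≤ (μ + L)⟪∇f a - ∇f b, a - b⟫` is the
Baillon–Haddad cocoercivity of the gradient of the convex function `f - μ/2 ‖·‖²`, whose gradient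
has curvature at most `L - μ`. Cocoercivity itself comes from the quadratic lower and upper
bounds on that function (mean value theorem along segments), evaluated at the minimizer of the upper model.
Since `∇f x* = 0`, expanding `‖x_k - h ∇f x_k - x*‖²` with `h = 2/(μ + L)` and bounding
`‖∇f x_k‖²` by the interpolation inequality leaves the factor
`1 - 4μL/(μ + L)² = ((L - μ)/(L + μ))²`.
-/

open scoped RealInnerProductSpace

section Gradient

variable {E : Type*} [NormedAddCommGroup E] [InnerProductSpace ℝ E] [CompleteSpace E]
  {φ : E → ℝ} {φ' : E → E}

theorem HasGradientAt.neg {g x : E} (h : HasGradientAt φ g x) :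
    HasGradientAt (fun z => -φ z) (-g) x := by
  rw [hasGradientAt_iff_hasFDerivAt, map_neg]
  exact h.hasFDerivAt.neg

theorem HasGradientAt.sub_mul_norm_sq {g x : E} (h : HasGradientAt φ g x) (m : ℝ) :
    HasGradientAt (fun z => φ z - m / 2 * ‖z‖ ^ 2) (g - m • x) x := by
  rw [hasGradientAt_iff_hasFDerivAt]
  refine (h.hasFDerivAt.sub
    ((hasStrictFDerivAt_norm_sq x).hasFDerivAt.const_mul (m / 2))).congr_fderiv ?_
  ext y
  simp
  ring

theorem HasGradientAt.hasDerivAt_comp_add_smul {a v g : E} {t : ℝ}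
    (h : HasGradientAt φ g (a + t • v)) :
    HasDerivAt (fun s : ℝ => φ (a + s • v)) ⟪g, v⟫ t := by
  have hline : HasDerivAt (fun s : ℝ => a + s • v) v t := by
    simpa using ((hasDerivAt_id t).smul_const v).const_add a
  have := h.hasFDerivAt.comp_hasDerivAt t hline
  simp only [InnerProductSpace.toDual_apply_apply] at this
  exact this

theorem IsLocalMin.hasGradientAt_eq_zero {g x : E} (hmin : IsLocalMin φ x)
    (h : HasGradientAt φ g x) : g = 0 := by
  simpa using hmin.hasFDerivAt_eq_zero h.hasFDerivAt

theorem add_inner_gradient_add_sq_le (hφ : ∀ z, HasGradientAt φ (φ' z) z) {m : ℝ}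
    (hm : ∀ p q, m * ‖p - q‖ ^ 2 ≤ ⟪φ' p - φ' q, p - q⟫) (a b : E) :
    φ a + ⟪φ' a, b - a⟫ + m / 2 * ‖b - a‖ ^ 2 ≤ φ b := by
  set v := b - a
  have hψ : ∀ t : ℝ,
      HasDerivAt (fun s => φ (a + s • v) - (s * ⟪φ' a, v⟫ + m / 2 * s ^ 2 * ‖v‖ ^ 2))
      (⟪φ' (a + t • v), v⟫ - (⟪φ' a, v⟫ + m * t * ‖v‖ ^ 2)) t := fun t => by
    have hline : HasDerivAt (fun s => φ (a + s • v)) ⟪φ' (a + t • v), v⟫ t :=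
      (hφ _).hasDerivAt_comp_add_smul
    refine (hline.sub (((hasDerivAt_id t).mul_const ⟪φ' a, v⟫).add
      (((hasDerivAt_pow 2 t).const_mul (m / 2)).mul_const (‖v‖ ^ 2)))).congr_deriv ?_
    simp only [Nat.cast_ofNat]
    ring
  obtain ⟨c, ⟨hc0, -⟩, hslope⟩ := exists_hasDerivAt_eq_slope _ _ one_pos
    (fun t _ => (hψ t).continuousAt.continuousWithinAt) (fun t _ => hψ t)
  have hmono : c * (m * c * ‖v‖ ^ 2) ≤ c * ⟪φ' (a + c • v) - φ' a, v⟫ := by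
    have := hm (a + c • v) a
    rw [add_sub_cancel_left, norm_smul, inner_smul_right, Real.norm_eq_abs, abs_of_pos hc0] at this
    linarith
  have hderiv : 0 ≤ ⟪φ' (a + c • v), v⟫ - (⟪φ' a, v⟫ + m * c * ‖v‖ ^ 2) := by
    rw [inner_sub_left] at hmono
    nlinarith
  rw [hslope] at hderiv
  simp only [one_smul, zero_smul, add_zero, one_mul, one_pow, zero_mul, mul_zero, sub_zero, div_one,
    zero_pow two_ne_zero, sub_nonneg, v, add_sub_cancel] at hderiv
  linarith

theorem le_add_inner_gradient_add_sq (hφ : ∀ z, HasGradientAt φ (φ' z) z) {M : ℝ}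
    (hM : ∀ p q, ⟪φ' p - φ' q, p - q⟫ ≤ M * ‖p - q‖ ^ 2) (a b : E) :
    φ b ≤ φ a + ⟪φ' a, b - a⟫ + M / 2 * ‖b - a‖ ^ 2 := by
  have := add_inner_gradient_add_sq_le (φ := fun z => -φ z) (φ' := fun z => -φ' z)
    (m := -M) (fun z => (hφ z).neg) (fun p q => by
      rw [← neg_sub', inner_neg_left]; linarith [hM p q]) a b
  simp only [inner_neg_left] at this
  linarith

theorem add_inner_gradient_add_sq_norm_sub_div_le (hφ : ∀ z, HasGradientAt φ (φ' z) z)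
    (hmono : ∀ p q, 0 ≤ ⟪φ' p - φ' q, p - q⟫) {M : ℝ} (hM0 : 0 < M)
    (hM : ∀ p q, ⟪φ' p - φ' q, p - q⟫ ≤ M * ‖p - q‖ ^ 2) (p q : E) :
    φ p + ⟪φ' p, q - p⟫ + ‖φ' q - φ' p‖ ^ 2 / (2 * M) ≤ φ q := by
  set w := φ' q - φ' p
  -- `z` minimizes the quadratic upper model of `φ` at `q`.
  set z := q - M⁻¹ • w
  have hlow := add_inner_gradient_add_sq_le hφ (m := 0) (fun p q => by simpa using hmono p q) p z
  have hup := le_add_inner_gradient_add_sq hφ hM q z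
  have hzp : z - p = (q - p) - M⁻¹ • w := sub_right_comm q _ p
  have hzq : z - q = -(M⁻¹ • w) := by simp [z]
  have hw : ⟪φ' q, w⟫ - ⟪φ' p, w⟫ = ‖w‖ ^ 2 := by
    rw [← inner_sub_left, real_inner_self_eq_norm_sq]
  rw [hzp, inner_sub_right, inner_smul_right] at hlow
  rw [hzq, inner_neg_right, inner_smul_right, norm_neg, norm_smul, Real.norm_eq_abs,
    abs_of_pos (inv_pos.mpr hM0)] at hup
  have hsq : M / 2 * (M⁻¹ * ‖w‖) ^ 2 = ‖w‖ ^ 2 / (2 * M) := by field_simp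
  have hlin : M⁻¹ * ⟪φ' q, w⟫ - M⁻¹ * ⟪φ' p, w⟫ = 2 * (‖w‖ ^ 2 / (2 * M)) := by
    rw [← mul_sub, hw]; field_simp
  linarith

theorem sq_norm_gradient_sub_le_mul_inner (hφ : ∀ z, HasGradientAt φ (φ' z) z)
    (hmono : ∀ p q, 0 ≤ ⟪φ' p - φ' q, p - q⟫) {M : ℝ} (hM0 : 0 < M)
    (hM : ∀ p q, ⟪φ' p - φ' q, p - q⟫ ≤ M * ‖p - q‖ ^ 2) (a b : E) :
    ‖φ' a - φ' b‖ ^ 2 ≤ M * ⟪φ' a - φ' b, a - b⟫ := by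
  have hab := add_inner_gradient_add_sq_norm_sub_div_le hφ hmono hM0 hM a b
  have hba := add_inner_gradient_add_sq_norm_sub_div_le hφ hmono hM0 hM b a
  rw [norm_sub_rev] at hab
  have hinner : ⟪φ' a - φ' b, a - b⟫ = -⟪φ' a, b - a⟫ - ⟪φ' b, a - b⟫ := by
    rw [inner_sub_left, ← neg_sub a b, inner_neg_right, neg_neg]
  have hdiv : ‖φ' a - φ' b‖ ^ 2 / M ≤ ⟪φ' a - φ' b, a - b⟫ := by
    have hhalf : ‖φ' a - φ' b‖ ^ 2 / M = 2 * (‖φ' a - φ' b‖ ^ 2 / (2 * M)) := by ring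
    rw [hinner, hhalf]; linarith
  rwa [div_le_iff₀' hM0] at hdiv

theorem mul_sq_norm_add_sq_norm_gradient_sub_le_inner (hφ : ∀ z, HasGradientAt φ (φ' z) z)
    {μ L : ℝ} (hμL : μ ≤ L) (hsc : ∀ x y, μ * ‖x - y‖ ^ 2 ≤ ⟪φ' x - φ' y, x - y⟫)
    (hLip : ∀ x y, ‖φ' x - φ' y‖ ≤ L * ‖x - y‖) (a b : E) :
    μ * L * ‖a - b‖ ^ 2 + ‖φ' a - φ' b‖ ^ 2 ≤ (μ + L) * ⟪φ' a - φ' b, a - b⟫ := by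
  have hinner_le : ∀ p q, ⟪φ' p - φ' q, p - q⟫ ≤ L * ‖p - q‖ ^ 2 := fun p q =>
    calc ⟪φ' p - φ' q, p - q⟫ ≤ ‖φ' p - φ' q‖ * ‖p - q‖ := real_inner_le_norm _ _
      _ ≤ L * ‖p - q‖ * ‖p - q‖ := by gcongr; exact hLip p q
      _ = L * ‖p - q‖ ^ 2 := by ring
  rcases hμL.lt_or_eq with hlt | rfl
  -- `φ - μ/2 ‖·‖²` is convex and its gradient `φ' - μ • id` is cocoercive with constant `L - μ`.
  · have htilt : ∀ p q, (φ' p - μ • p) - (φ' q - μ • q) = (φ' p - φ' q) - μ • (p - q) := by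
      intro p q; rw [smul_sub]; abel
    have hinner_tilt : ∀ p q, ⟪(φ' p - φ' q) - μ • (p - q), p - q⟫
        = ⟪φ' p - φ' q, p - q⟫ - μ * ‖p - q‖ ^ 2 := by
      intro p q; rw [inner_sub_left, real_inner_smul_left, real_inner_self_eq_norm_sq]
    have hcoco := sq_norm_gradient_sub_le_mul_inner (φ' := fun z => φ' z - μ • z)
      (fun z => (hφ z).sub_mul_norm_sq μ)
      (fun p q => by rw [htilt, hinner_tilt]; linarith [hsc p q]) (sub_pos.mpr hlt)
      (fun p q => by rw [htilt, hinner_tilt]; linarith [hinner_le p q]) a b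
    rw [htilt, hinner_tilt, norm_sub_sq_real, real_inner_smul_right, norm_smul, mul_pow,
      Real.norm_eq_abs, sq_abs] at hcoco
    linarith
  · rw [le_antisymm (hinner_le a b) (hsc a b)]
    nlinarith [mul_self_le_mul_self (norm_nonneg _) (hLip a b)]

end Gradient

theorem norm_sub_two_div_smul_sq_le {F : Type*} [NormedAddCommGroup F] [InnerProductSpace ℝ F]
    {μ L : ℝ} (hμL : 0 < μ + L) {d g : F}
    (h : μ * L * ‖d‖ ^ 2 + ‖g‖ ^ 2 ≤ (μ + L) * ⟪g, d⟫) :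
    ‖d - (2 / (μ + L)) • g‖ ^ 2 ≤ ((L - μ) / (L + μ)) ^ 2 * ‖d‖ ^ 2 := by
  set c := 2 / (μ + L)
  calc ‖d - c • g‖ ^ 2 = ‖d‖ ^ 2 - 2 * c * ⟪g, d⟫ + c ^ 2 * ‖g‖ ^ 2 := by
        rw [norm_sub_sq_real, real_inner_smul_right, norm_smul, mul_pow, Real.norm_eq_abs,
          sq_abs, real_inner_comm]
        ring
    _ ≤ ‖d‖ ^ 2 - 2 * c * ⟪g, d⟫ + c ^ 2 * ((μ + L) * ⟪g, d⟫ - μ * L * ‖d‖ ^ 2) := by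
        gcongr; linarith
    _ = ((L - μ) / (L + μ)) ^ 2 * ‖d‖ ^ 2 := by
        rw [add_comm L μ]; simp only [c]; field_simp; ring

theorem stmt2_general {n : ℕ} (f : EuclideanSpace ℝ (Fin n) → ℝ)
    (f' : EuclideanSpace ℝ (Fin n) → EuclideanSpace ℝ (Fin n))
    (hf : ∀ x, HasGradientAt f (f' x) x)
    (μ L : ℝ) (hμ : 0 < μ) (hμL : μ ≤ L)
    (hsc : ∀ x y, μ * ‖x - y‖^2 ≤ ⟪f' x - f' y, x - y⟫)
    (hLip : ∀ x y, ‖f' x - f' y‖ ≤ L * ‖x - y‖)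
    (xstar : EuclideanSpace ℝ (Fin n))
    (hmin : ∀ y, f xstar ≤ f y)
    (x : ℕ → EuclideanSpace ℝ (Fin n))
    (hiter : ∀ k, x (k+1) = x k - (2/(μ+L)) • f' (x k)) :
    ∀ k, ‖x (k+1) - xstar‖^2 ≤ ((L-μ)/(L+μ))^2 * ‖x k - xstar‖^2 := by
  have hstar : f' xstar = 0 :=
    IsLocalMin.hasGradientAt_eq_zero (Filter.Eventually.of_forall hmin) (hf xstar)
  intro k
  have h := mul_sq_norm_add_sq_norm_gradient_sub_le_inner hf hμL hsc hLip (x k) xstar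
  rw [hstar, sub_zero] at h
  rw [hiter k, sub_right_comm]
  exact norm_sub_two_div_smul_sq_le (by linarith) h

/-- For `f ∈ S^{1,1}_{μ,L}`, gradient descent with `h = 2/(μ+L)` satisfies
`‖x_{k+1} − x*‖² ≤ ((L−μ)/(L+μ))²·‖x_k − x*‖²`. -/
theorem stmt2 {n : ℕ} (f : EuclideanSpace ℝ (Fin n) → ℝ)
    (f' : EuclideanSpace ℝ (Fin n) → EuclideanSpace ℝ (Fin n))
    (hf : ∀ x, HasGradientAt f (f' x) x)
    (μ L : ℝ) (hμ : 0 < μ) (hμL : μ ≤ L)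
    (hsc : ∀ x y, μ * ‖x - y‖^2 ≤ ⟪f' x - f' y, x - y⟫)
    (hLip : ∀ x y, ‖f' x - f' y‖ ≤ L * ‖x - y‖)
    (xstar : EuclideanSpace ℝ (Fin n))
    (hmin : ∀ y, f xstar ≤ f y)
    (huniq : ∀ z, (∀ y, f z ≤ f y) → z = xstar)
    (x : ℕ → EuclideanSpace ℝ (Fin n))
    (hiter : ∀ k, x (k+1) = x k - (2/(μ+L)) • f' (x k)) :
    ∀ k, ‖x (k+1) - xstar‖^2 ≤ ((L-μ)/(L+μ))^2 * ‖x k - xstar‖^2 :=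
  stmt2_general f f' hf μ L hμ hμL hsc hLip xstar hmin x hiter
end

section
/- Let f : ℝⁿ → ℝ have L-Lipschitz gradient, achieve its minimum with crit f = Argmin f ≠ ∅, and satisfy ‖∇f(x)‖ ≥ ν·d(x, crit f) on the sublevel set Ω = {x : f(x) ≤ min f + ε} with ν < L. Then gradient descent with step size 1/L started in Ω satisfies f(x_{k+1}) − min f ≤ (1 − (ν/L)²)·(f(x_k) − min f) for all k ≥ 0. -/
open scoped RealInnerProductSpace

/-!
The descent lemma gives, for the step `x⁺ = x - (1/L) ∇f(x)`, the sufficient decrease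
`f(x⁺) ≤ f(x) - ‖∇f(x)‖² / (2L)`; in particular `f` decreases along the iterates, which therefore
stay in `Ω`. Applied at a critical point `w`, where `f(w) = min f`, it also gives the quadratic
growth `f(x) - min f ≤ (L/2) d(x, crit f)²`. Together with the error bound this yields
`‖∇f(x)‖² ≥ ν² d(x, crit f)² ≥ (2ν²/L) (f(x) - min f)`, and substituting into the sufficient
decrease gives the linear rate.
-/

theorem le_mul_sq_infDist_of_forall_mem {α : Type*} [PseudoMetricSpace α] {a c : ℝ} (hc : 0 < c)
    {s : Set α} (hs : s.Nonempty) {x : α} (h : ∀ y ∈ s, a ≤ c * dist x y ^ 2) :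
    a ≤ c * Metric.infDist x s ^ 2 := by
  have hsqrt : √(a / c) ≤ Metric.infDist x s :=
    (Metric.le_infDist hs).2 fun y hy =>
      Real.sqrt_le_iff.2 ⟨dist_nonneg, (div_le_iff₀' hc).2 (h y hy)⟩
  have := (Real.sqrt_le_iff.1 hsqrt).2
  rwa [div_le_iff₀' hc] at this

section LipschitzGradient

variable {E : Type*} [NormedAddCommGroup E] [InnerProductSpace ℝ E] [CompleteSpace E]
  {f : E → ℝ} {f' : E → E} {L : ℝ}

theorem descent_lemma (hf : ∀ x, HasGradientAt f (f' x) x)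
    (hLip : ∀ x y, ‖f' x - f' y‖ ≤ L * ‖x - y‖) (x y : E) :
    f y ≤ f x + ⟪f' x, y - x⟫ + L / 2 * ‖y - x‖ ^ 2 := by
  set d := y - x
  -- The claim is `φ 1 ≤ φ 0`; `φ` is antitone on `[0, 1]` because the Lipschitz bound
  -- makes `φ' ≤ 0`.
  let φ : ℝ → ℝ := fun t => f (x + t • d) - t * ⟪f' x, d⟫ - L / 2 * t ^ 2 * ‖d‖ ^ 2
  have hφ : ∀ t, HasDerivAt φ (⟪f' (x + t • d), d⟫ - ⟪f' x, d⟫ - L * t * ‖d‖ ^ 2) t := by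
    intro t
    have hline : HasDerivAt (fun t : ℝ => x + t • d) d t := by
      simpa using ((hasDerivAt_id t).smul_const d).const_add x
    have hcomp := (hf (x + t • d)).hasFDerivAt.comp_hasDerivAt t hline
    rw [InnerProductSpace.toDual_apply_apply] at hcomp
    have := (hcomp.sub ((hasDerivAt_id t).mul_const ⟪f' x, d⟫)).sub
      (((hasDerivAt_pow 2 t).const_mul (L / 2)).mul_const (‖d‖ ^ 2))
    refine this.congr_deriv ?_
    simp only [one_mul, Nat.cast_ofNat, Nat.add_one_sub_one, pow_one]
    ring
  have hφ' : ∀ t ∈ interior (Set.Icc (0 : ℝ) 1),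
      ⟪f' (x + t • d), d⟫ - ⟪f' x, d⟫ - L * t * ‖d‖ ^ 2 ≤ 0 := by
    intro t ht
    rw [interior_Icc] at ht
    rw [sub_nonpos]
    have hgap : ‖f' (x + t • d) - f' x‖ ≤ L * (t * ‖d‖) := by
      simpa [norm_smul, abs_of_pos ht.1] using hLip (x + t • d) x
    calc ⟪f' (x + t • d), d⟫ - ⟪f' x, d⟫ = ⟪f' (x + t • d) - f' x, d⟫ := (inner_sub_left ..).symm
      _ ≤ ‖f' (x + t • d) - f' x‖ * ‖d‖ := real_inner_le_norm _ _
      _ ≤ L * (t * ‖d‖) * ‖d‖ := by gcongr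
      _ = L * t * ‖d‖ ^ 2 := by ring
  have hanti := antitoneOn_of_hasDerivWithinAt_nonpos (convex_Icc 0 1)
    (HasDerivAt.continuousOn fun t _ => hφ t) (fun t _ => (hφ t).hasDerivWithinAt) hφ'
  have h10 := hanti (Set.left_mem_Icc.2 zero_le_one) (Set.right_mem_Icc.2 zero_le_one) zero_le_one
  simp [φ, d] at h10
  linarith

theorem gradient_step_le (hf : ∀ x, HasGradientAt f (f' x) x)
    (hLip : ∀ x y, ‖f' x - f' y‖ ≤ L * ‖x - y‖) (hL : 0 < L) (x : E) :
    f (x - (1 / L) • f' x) ≤ f x - 1 / (2 * L) * ‖f' x‖ ^ 2 := by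
  have h := descent_lemma hf hLip x (x - (1 / L) • f' x)
  rw [sub_sub_cancel_left, inner_neg_right, real_inner_smul_right, real_inner_self_eq_norm_sq,
    norm_neg, norm_smul, Real.norm_of_nonneg (by positivity)] at h
  convert h using 1
  field_simp
  ring

theorem sub_le_of_gradient_eq_zero (hf : ∀ x, HasGradientAt f (f' x) x)
    (hLip : ∀ x y, ‖f' x - f' y‖ ≤ L * ‖x - y‖) {w : E} (hw : f' w = 0) (z : E) :
    f z - f w ≤ L / 2 * dist z w ^ 2 := by
  have h := descent_lemma hf hLip w z
  rw [hw, inner_zero_left, ← dist_eq_norm] at h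
  linarith

theorem sub_le_half_mul_sq_infDist (hf : ∀ x, HasGradientAt f (f' x) x)
    (hLip : ∀ x y, ‖f' x - f' y‖ ≤ L * ‖x - y‖) (hL : 0 < L) {S : Set E} (hS : S.Nonempty)
    {m : ℝ} (hSf' : ∀ w ∈ S, f' w = 0) (hSm : ∀ w ∈ S, f w ≤ m) (z : E) :
    f z - m ≤ L / 2 * Metric.infDist z S ^ 2 :=
  le_mul_sq_infDist_of_forall_mem (by positivity) hS fun w hw =>
    (sub_le_sub_left (hSm w hw) _).trans (sub_le_of_gradient_eq_zero hf hLip (hSf' w hw) z)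

theorem gradient_step_sub_le_mul (hf : ∀ x, HasGradientAt f (f' x) x)
    (hLip : ∀ x y, ‖f' x - f' y‖ ≤ L * ‖x - y‖) (hL : 0 < L) {S : Set E} (hS : S.Nonempty)
    {m : ℝ} (hSf' : ∀ w ∈ S, f' w = 0) (hSm : ∀ w ∈ S, f w ≤ m) {ν : ℝ} (hν : 0 ≤ ν) {z : E}
    (hEB : ν * Metric.infDist z S ≤ ‖f' z‖) :
    f (z - (1 / L) • f' z) - m ≤ (1 - (ν / L) ^ 2) * (f z - m) := by
  have hgrowth := sub_le_half_mul_sq_infDist hf hLip hL hS hSf' hSm z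
  have hgrad : 2 * ν ^ 2 / L * (f z - m) ≤ ‖f' z‖ ^ 2 :=
    calc 2 * ν ^ 2 / L * (f z - m) ≤ 2 * ν ^ 2 / L * (L / 2 * Metric.infDist z S ^ 2) := by
          gcongr
      _ = (ν * Metric.infDist z S) ^ 2 := by field_simp
      _ ≤ ‖f' z‖ ^ 2 := pow_le_pow_left₀ (mul_nonneg hν Metric.infDist_nonneg) hEB 2
  have hstep := gradient_step_le hf hLip hL z
  have hgain : (ν / L) ^ 2 * (f z - m) ≤ 1 / (2 * L) * ‖f' z‖ ^ 2 := by
    calc (ν / L) ^ 2 * (f z - m) = 1 / (2 * L) * (2 * ν ^ 2 / L * (f z - m)) := by field_simp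
      _ ≤ 1 / (2 * L) * ‖f' z‖ ^ 2 := by gcongr
  linarith

end LipschitzGradient

theorem stmt9_general {n : ℕ} (f : EuclideanSpace ℝ (Fin n) → ℝ)
    (f' : EuclideanSpace ℝ (Fin n) → EuclideanSpace ℝ (Fin n))
    (hf : ∀ x, HasGradientAt f (f' x) x)
    (L : ℝ) (hL : 0 < L)
    (hLip : ∀ x y, ‖f' x - f' y‖ ≤ L * ‖x - y‖)
    (m : ℝ) (hm : ∀ x, m ≤ f x) (hach : ∃ x, f x = m)
    (hcrit : {x | f' x = 0} = {x | ∀ y, f x ≤ f y})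
    (ε : ℝ)
    (ν : ℝ) (hν : 0 < ν)
    (hEB : ∀ x ∈ {x | f x ≤ m + ε},
      ν * Metric.infDist x {x | f' x = 0} ≤ ‖f' x‖)
    (x : ℕ → EuclideanSpace ℝ (Fin n))
    (hx0 : x 0 ∈ {x | f x ≤ m + ε})
    (hiter : ∀ k, x (k+1) = x k - (1/L) • f' (x k)) :
    ∀ k, f (x (k+1)) - m ≤ (1 - (ν/L)^2) * (f (x k) - m) := by
  obtain ⟨x₀, hx₀⟩ := hach
  have hx₀_crit : x₀ ∈ {x | f' x = 0} := hcrit ▸ fun y => hx₀ ▸ hm y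
  have hcrit_le : ∀ w ∈ {x | f' x = 0}, f w ≤ m := fun w hw => by
    rw [hcrit] at hw
    exact hx₀ ▸ hw x₀
  have hdecr : Antitone (f ∘ x) := antitone_nat_of_succ_le fun k => by
    rw [Function.comp_apply, hiter k]
    exact (gradient_step_le hf hLip hL (x k)).trans (sub_le_self _ (by positivity))
  intro k
  rw [hiter k]
  exact gradient_step_sub_le_mul hf hLip hL ⟨x₀, hx₀_crit⟩ (fun _ hw => hw) hcrit_le hν.le
    (hEB _ ((hdecr k.zero_le).trans hx0))

/-- For `f` with `L`-Lipschitz gradient, `crit f = Argmin f ≠ ∅`, and the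
residual error bound `‖∇f(x)‖ ≥ ν·d(x, crit f)` on `Ω = {x : f(x) ≤ min f + ε}` with
`ν < L`, gradient descent with step `1/L` started in `Ω` converges linearly:
`f(x_{k+1}) − min f ≤ (1 − (ν/L)²)·(f(x_k) − min f)`. -/
theorem stmt9 {n : ℕ} (f : EuclideanSpace ℝ (Fin n) → ℝ)
    (f' : EuclideanSpace ℝ (Fin n) → EuclideanSpace ℝ (Fin n))
    (hf : ∀ x, HasGradientAt f (f' x) x)
    (L : ℝ) (hL : 0 < L)
    (hLip : ∀ x y, ‖f' x - f' y‖ ≤ L * ‖x - y‖)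
    (m : ℝ) (hm : ∀ x, m ≤ f x) (hach : ∃ x, f x = m)
    (hcrit : {x | f' x = 0} = {x | ∀ y, f x ≤ f y})
    (hne : {x | f' x = 0}.Nonempty)
    (ε : ℝ) (hε : 0 < ε)
    (ν : ℝ) (hν : 0 < ν) (hνL : ν < L)
    (hEB : ∀ x ∈ {x | f x ≤ m + ε},
      ν * Metric.infDist x {x | f' x = 0} ≤ ‖f' x‖)
    (x : ℕ → EuclideanSpace ℝ (Fin n))
    (hx0 : x 0 ∈ {x | f x ≤ m + ε})
    (hiter : ∀ k, x (k+1) = x k - (1/L) • f' (x k)) :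
    ∀ k, f (x (k+1)) - m ≤ (1 - (ν/L)^2) * (f (x k) - m) :=
  stmt9_general f f' hf L hL hLip m hm hach hcrit ε ν hν hEB x hx0 hiter
end
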